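/- If φ ∈ R̊(Ω) satisfies (rot φ)_i = (rot φ)_j = 0 on Ω for some distinct i,j, then φ_k has zero mean on every beam Ω_{ij} = {x ∈ Ω : α_i < x_i < β_i, α_j < x_j < β_j}, where k is the remaining index. -/

import Mathlib

open MeasureTheory Filter Topology

noncomputable section

/-- Vectors in `ℝ³`. -/
abbrev V3 := Fin 3 → ℝ

/-- The open rectangular cuboid `(0,l₁)×(0,l₂)×(0,l₃)`. -/
def cuboid (l : Fin 3 → ℝ) : Set V3 := Set.univ.pi fun i => Set.Ioo 0 (l i)

/-- The slab `Ω_i = {x ∈ Ω : a < x_i < b}`. -/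
def slab (Ω : Set V3) (i : Fin 3) (a b : ℝ) : Set V3 :=
  {x ∈ Ω | a < x i ∧ x i < b}

/-- The beam `Ω_{jk} = {x ∈ Ω : a_j < x_j < b_j, a_k < x_k < b_k}`. -/
def beam (Ω : Set V3) (j k : Fin 3) (aj bj ak bk : ℝ) : Set V3 :=
  {x ∈ Ω | (aj < x j ∧ x j < bj) ∧ (ak < x k ∧ x k < bk)}

/-- Partial derivative `∂_j φ_i`. -/
def pder (i j : Fin 3) (φ : V3 → V3) (x : V3) : ℝ :=
  fderiv ℝ (fun y => φ y i) x (Pi.single j 1)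

/-- Divergence of a (smooth) vector field. -/
def div3 (φ : V3 → V3) (x : V3) : ℝ := pder 0 0 φ x + pder 1 1 φ x + pder 2 2 φ x

/-- Rotation (curl) of a (smooth) vector field. -/
def rot3 (φ : V3 → V3) (x : V3) : V3 :=
  ![pder 2 1 φ x - pder 1 2 φ x,
    pder 0 2 φ x - pder 2 0 φ x,
    pder 1 0 φ x - pder 0 1 φ x]

/-- Scalar test functions: smooth with compact support contained in `Ω`. -/
def TestFun (Ω : Set V3) (ψ : V3 → ℝ) : Prop :=
  ContDiff ℝ (⊤ : ℕ∞) ψ ∧ HasCompactSupport ψ ∧ tsupport ψ ⊆ Ω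

/-- Vector test fields: smooth with compact support contained in `Ω`. -/
def TestField (Ω : Set V3) (φ : V3 → V3) : Prop :=
  ContDiff ℝ (⊤ : ℕ∞) φ ∧ HasCompactSupport φ ∧ tsupport φ ⊆ Ω

/-- `L²(Ω)` convergence of a sequence of scalar functions. -/
def L2TendstoS (Ω : Set V3) (f : ℕ → V3 → ℝ) (g : V3 → ℝ) : Prop :=
  Tendsto (fun n => ∫ x in Ω, (f n x - g x) ^ 2) atTop (𝓝 0)

/-- `L²(Ω)` convergence of a sequence of vector fields. -/
def L2TendstoV (Ω : Set V3) (f : ℕ → V3 → V3) (g : V3 → V3) : Prop :=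
  Tendsto (fun n => ∫ x in Ω, ∑ i : Fin 3, (f n x i - g x i) ^ 2) atTop (𝓝 0)

/-- `φ ∈ D̊(Ω)` with (weak) divergence `dφ`: `φ` is the limit of test fields in
the graph norm of the divergence. -/
def MemDc (Ω : Set V3) (φ : V3 → V3) (dφ : V3 → ℝ) : Prop :=
  ∃ φs : ℕ → V3 → V3, (∀ n, TestField Ω (φs n)) ∧
    L2TendstoV Ω φs φ ∧ L2TendstoS Ω (fun n => div3 (φs n)) dφ

/-- `φ ∈ R̊(Ω)` with (weak) rotation `rφ`: `φ` is the limit of test fields in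
the graph norm of the rotation. -/
def MemRc (Ω : Set V3) (φ : V3 → V3) (rφ : V3 → V3) : Prop :=
  ∃ φs : ℕ → V3 → V3, (∀ n, TestField Ω (φs n)) ∧
    L2TendstoV Ω φs φ ∧ L2TendstoV Ω (fun n => rot3 (φs n)) rφ

/-- `φ ∈ D(Ω)` with weak divergence `g`, via integration by parts. -/
def HasWeakDiv (Ω : Set V3) (φ : V3 → V3) (g : V3 → ℝ) : Prop :=
  ∀ ψ, TestFun Ω ψ →
    ∫ x in Ω, ∑ i : Fin 3, φ x i * fderiv ℝ ψ x (Pi.single i 1) = - ∫ x in Ω, g x * ψ x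

/-- `φ ∈ R(Ω)` with weak rotation `g`, via integration by parts. -/
def HasWeakCurl (Ω : Set V3) (φ g : V3 → V3) : Prop :=
  ∀ ψ, TestField Ω ψ →
    ∫ x in Ω, ∑ i : Fin 3, φ x i * rot3 ψ x i = ∫ x in Ω, ∑ i : Fin 3, g x i * ψ x i

/-- `φ ∈ H¹(Ω)`-type membership: `g` is the weak gradient of the scalar function `φ`. -/
def HasWeakGrad (Ω : Set V3) (φ : V3 → ℝ) (g : V3 → V3) : Prop :=
  ∀ i : Fin 3, ∀ ψ, TestFun Ω ψ →
    ∫ x in Ω, φ x * fderiv ℝ ψ x (Pi.single i 1) = - ∫ x in Ω, g x i * ψ x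

/-- `φ ∈ H̊¹(Ω)` with weak gradient `g`: limit of scalar test functions in the `H¹` norm. -/
def MemH10 (Ω : Set V3) (φ : V3 → ℝ) (g : V3 → V3) : Prop :=
  ∃ φs : ℕ → V3 → ℝ, (∀ n, TestFun Ω (φs n)) ∧ L2TendstoS Ω φs φ ∧
    L2TendstoV Ω (fun n x i => fderiv ℝ (φs n) x (Pi.single i 1)) g

/-- Membership in `L²(Ω)`. -/
def L2 (Ω : Set V3) {E : Type*} [NormedAddCommGroup E] [MeasurableSpace E] (f : V3 → E) : Prop :=
  MemLp f 2 (volume.restrict Ω)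

/-- Euclidean diameter of the projection of `Ω` to the `(e_j,e_k)`-plane. -/
def projDiam (Ω : Set V3) (j k : Fin 3) : ℝ :=
  Metric.diam ((fun x => ((WithLp.equiv 2 (Fin 2 → ℝ)).symm ![x j, x k] :
    EuclideanSpace ℝ (Fin 2))) '' Ω)

/-- Euclidean diameter of a subset of `ℝ³`. -/
def eDiam (Ω : Set V3) : ℝ :=
  Metric.diam ((fun x => ((WithLp.equiv 2 (Fin 3 → ℝ)).symm x :
    EuclideanSpace ℝ (Fin 3))) '' Ω)

/-- The set of admissible constants in the Maxwell inequality for `R̊ ∩ D₀`. -/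
def maxwellSet1 (Ω : Set V3) : Set ℝ :=
  {c | 0 ≤ c ∧ ∀ φ rφ : V3 → V3, MemRc Ω φ rφ → HasWeakDiv Ω φ 0 → L2 Ω φ → L2 Ω rφ →
      ∫ x in Ω, ∑ i : Fin 3, (φ x i) ^ 2 ≤ c ^ 2 * ∫ x in Ω, ∑ i : Fin 3, (rφ x i) ^ 2}

/-- The set of admissible constants in the Maxwell inequality for `R ∩ D̊₀`. -/
def maxwellSet2 (Ω : Set V3) : Set ℝ :=
  {c | 0 ≤ c ∧ ∀ φ rφ : V3 → V3, HasWeakCurl Ω φ rφ → MemDc Ω φ 0 → L2 Ω φ → L2 Ω rφ →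
      ∫ x in Ω, ∑ i : Fin 3, (φ x i) ^ 2 ≤ c ^ 2 * ∫ x in Ω, ∑ i : Fin 3, (rφ x i) ^ 2}

/-- The best (smallest) Maxwell constant `c_{m,1}`. -/
def cm1 (Ω : Set V3) : ℝ := sInf (maxwellSet1 Ω)

/-- The best (smallest) Maxwell constant `c_{m,2}`. -/
def cm2 (Ω : Set V3) : ℝ := sInf (maxwellSet2 Ω)

/-- The best specialized Poincaré constant `c_{p,i}` for functions with zero mean on
all slabs perpendicular to `e_i` (relative to a cuboid `(0,l₁)×(0,l₂)×(0,l₃) ⊇ Ω`). -/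
def cpConst (Ω : Set V3) (l : Fin 3 → ℝ) (i : Fin 3) : ℝ :=
  sInf {c | 0 ≤ c ∧ ∀ (φ : V3 → ℝ) (g : V3 → V3), HasWeakGrad Ω φ g → L2 Ω φ → L2 Ω g →
    (∀ α β : ℝ, 0 ≤ α → α < β → β ≤ l i → ∫ x in slab Ω i α β, φ x = 0) →
    ∫ x in Ω, (φ x) ^ 2 ≤ c ^ 2 * ∫ x in Ω, ∑ m : Fin 3, (g x m) ^ 2}

/-- The best Friedrichs constant for `H̊¹(Ω)`. -/
def cfConst (Ω : Set V3) : ℝ :=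
  sInf {c | 0 ≤ c ∧ ∀ (φ : V3 → ℝ) (g : V3 → V3), MemH10 Ω φ g → L2 Ω φ → L2 Ω g →
    ∫ x in Ω, (φ x) ^ 2 ≤ c ^ 2 * ∫ x in Ω, ∑ m : Fin 3, (g x m) ^ 2}

noncomputable def clampf (c d t : ℝ) : ℝ := min (max t c) d - c

lemma clampf_nonneg {c d t : ℝ} (h : c ≤ d) : 0 ≤ clampf c d t := by
  simp only [clampf, sub_nonneg, le_min_iff]
  exact ⟨le_max_right _ _, h⟩

lemma clampf_le {c d t : ℝ} (h : c ≤ d) : clampf c d t ≤ d - c := by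
  simp only [clampf]; gcongr; exact min_le_right _ _

lemma continuous_clampf (c d : ℝ) : Continuous (clampf c d) := by
  unfold clampf; fun_prop

-- deriv vanishes off tsupport
lemma deriv_eq_zero_of_not_mem_tsupport {f : ℝ → ℝ} {t : ℝ} (h : t ∉ tsupport f) :
    deriv f t = 0 := by
  have h1 : f =ᶠ[𝓝 t] 0 := by
    filter_upwards [isOpen_compl_iff.2 (isClosed_tsupport f) |>.mem_nhds h] with s hs
    exact image_eq_zero_of_notMem_tsupport hs
  rw [h1.deriv_eq]; exact deriv_const t 0

lemma integrable_of_cont_cs {f : ℝ → ℝ} (hf : Continuous f) (hs : HasCompactSupport f) :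
    Integrable f := hf.integrable_of_hasCompactSupport hs

-- integral of deriv over Ioi d equals -f d, for smooth compactly supported f
lemma integral_deriv_Ioi {f : ℝ → ℝ} (hf : ContDiff ℝ (⊤ : ℕ∞) f) (hs : HasCompactSupport f) (d : ℝ) :
    ∫ t in Set.Ioi d, deriv f t = - f d := by
  obtain ⟨R, hR1, hR2⟩ : ∃ R : ℝ, tsupport f ⊆ Set.Iio R ∧ d < R := by
    obtain ⟨R0, hR0⟩ := (hs.isBounded).subset_ball 0
    refine ⟨max R0 (d+1), fun x hx => ?_, ?_⟩
    · have := hR0 hx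
      simp only [Metric.mem_ball, Real.dist_eq, sub_zero] at this
      exact Set.mem_Iio.2 (lt_of_lt_of_le (lt_of_abs_lt this) (le_max_left _ _))
    · exact lt_max_iff.2 (Or.inr (by linarith))
  have hderiv_cont : Continuous (deriv f) := hf.continuous_deriv (by simp)
  have hsplit : Set.Ioi d = Set.Ioc d R ∪ Set.Ioi R := (Set.Ioc_union_Ioi_eq_Ioi hR2.le).symm
  have hint : Integrable (deriv f) := integrable_of_cont_cs hderiv_cont (hs.deriv)
  rw [hsplit, setIntegral_union (Set.Ioc_disjoint_Ioi le_rfl) measurableSet_Ioi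
      hint.integrableOn hint.integrableOn]
  have h2 : ∫ t in Set.Ioi R, deriv f t = 0 := by
    apply setIntegral_eq_zero_of_forall_eq_zero
    intro t ht
    exact deriv_eq_zero_of_not_mem_tsupport (fun hmem => absurd (Set.mem_Iio.1 (hR1 hmem)) (not_lt.2 (Set.mem_Ioi.1 ht).le))
  have h1 : ∫ t in Set.Ioc d R, deriv f t = f R - f d := by
    rw [← intervalIntegral.integral_of_le hR2.le]
    exact intervalIntegral.integral_deriv_eq_sub
      (fun t _ => hf.differentiable (by simp) t)
      (hderiv_cont.intervalIntegrable d R)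
  have hfR : f R = 0 :=
    image_eq_zero_of_notMem_tsupport (fun hm => lt_irrefl R (hR1 hm))
  rw [h1, h2, hfR]; ring

lemma oneD_int1 {f : ℝ → ℝ} (hf : Continuous f) (hs : HasCompactSupport f) (c d : ℝ) :
    Integrable (fun t => (Set.Ioo c d).indicator (fun _ => (1:ℝ)) t * f t) := by
  have : (fun t => (Set.Ioo c d).indicator (fun _ => (1:ℝ)) t * f t)
      = (Set.Ioo c d).indicator f := by
    funext t; by_cases h : t ∈ Set.Ioo c d <;> simp [h]
  rw [this]
  exact (integrable_of_cont_cs hf hs).indicator measurableSet_Ioo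

lemma oneD_int2 {f : ℝ → ℝ} (hf : Continuous f) (hs : HasCompactSupport f) {c d : ℝ}
    (hcd : c ≤ d) :
    Integrable (fun t => clampf c d t * f t) := by
  refine (integrable_of_cont_cs hf hs).bdd_mul
    (continuous_clampf c d).aestronglyMeasurable (c := d - c) (Eventually.of_forall fun t => ?_)
  rw [Real.norm_eq_abs, abs_of_nonneg (clampf_nonneg hcd)]
  exact clampf_le hcd

lemma oneD_key {f : ℝ → ℝ} (hf : ContDiff ℝ (⊤ : ℕ∞) f) (hs : HasCompactSupport f) {c d : ℝ}
    (hcd : c < d) :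
    ∫ t, ((Set.Ioo c d).indicator (fun _ => (1:ℝ)) t * f t + clampf c d t * deriv f t) = 0 := by
  have hderiv_cont : Continuous (deriv f) := hf.continuous_deriv (by simp)
  have hI1 := oneD_int1 hf.continuous hs c d
  have hI2 := oneD_int2 hderiv_cont hs.deriv hcd.le
  set h : ℝ → ℝ := fun t =>
    (Set.Ioo c d).indicator (fun _ => (1:ℝ)) t * f t + clampf c d t * deriv f t with hh
  have hInt : Integrable h := hI1.add hI2
  have hzero : ∀ t ∉ Set.Ioi c, h t = 0 := by
    intro t ht
    simp only [Set.mem_Ioi, not_lt] at ht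
    have h1 : t ∉ Set.Ioo c d := fun hmem => absurd hmem.1 (not_lt.2 ht)
    have h2 : clampf c d t = 0 := by
      simp only [clampf, max_eq_right ht, min_eq_left hcd.le, sub_self]
    simp [hh, h1, h2]
  have e0 : ∫ t, h t = ∫ t in Set.Ioi c, h t :=
    (setIntegral_eq_integral_of_forall_compl_eq_zero hzero).symm
  have hsplit : Set.Ioi c = Set.Ioc c d ∪ Set.Ioi d := (Set.Ioc_union_Ioi_eq_Ioi hcd.le).symm
  have e1 : ∫ t in Set.Ioc c d, h t = (d - c) * f d := by
    rw [integral_Ioc_eq_integral_Ioo]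
    have : ∫ t in Set.Ioo c d, h t = ∫ t in Set.Ioo c d, (f t + (t - c) * deriv f t) := by
      apply setIntegral_congr_fun measurableSet_Ioo
      intro t ht
      have hcl : clampf c d t = t - c := by
        simp only [clampf, max_eq_left ht.1.le, min_eq_left ht.2.le]
      simp [hh, ht, hcl]
    rw [this, ← integral_Ioc_eq_integral_Ioo, ← intervalIntegral.integral_of_le hcd.le]
    have hG : ∀ t ∈ Set.uIcc c d, HasDerivAt (fun s => (s - c) * f s)
        (f t + (t - c) * deriv f t) t := by
      intro t _
      have h1 : HasDerivAt (fun s : ℝ => s - c) 1 t := (hasDerivAt_id t).sub_const c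
      have h2 : HasDerivAt f (deriv f t) t := (hf.differentiable (by simp) t).hasDerivAt
      have := h1.mul h2
      rw [one_mul] at this
      exact this
    have hii : IntervalIntegrable (fun t => f t + (t - c) * deriv f t) volume c d :=
      (hf.continuous.add ((continuous_id.sub continuous_const).mul hderiv_cont)).intervalIntegrable c d
    rw [intervalIntegral.integral_eq_sub_of_hasDerivAt hG hii]
    ring
  have e2 : ∫ t in Set.Ioi d, h t = (d - c) * (- f d) := by
    have : ∫ t in Set.Ioi d, h t = ∫ t in Set.Ioi d, (d - c) * deriv f t := by
      apply setIntegral_congr_fun measurableSet_Ioi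
      intro t ht
      have h1 : t ∉ Set.Ioo c d := fun hmem => absurd hmem.2 (not_lt.2 ht.le)
      have hcl : clampf c d t = d - c := by
        simp only [clampf, max_eq_left (le_trans hcd.le (Set.mem_Ioi.1 ht).le), min_eq_right (Set.mem_Ioi.1 ht).le]
      simp [hh, h1, hcl]
    rw [this, integral_const_mul, integral_deriv_Ioi hf hs]
  rw [e0, hsplit, setIntegral_union (Set.Ioc_disjoint_Ioi le_rfl) measurableSet_Ioi
      hInt.integrableOn hInt.integrableOn, e1, e2]
  ring

section helpers
open Function

lemma update_eq_affine (x : V3) (n : Fin 3) (s : ℝ) :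
    Function.update x n s = x + (s - x n) • (Pi.single n 1 : V3) := by
  funext l
  by_cases hl : l = n
  · subst hl; simp
  · simp [Function.update_of_ne hl, Pi.single_apply, hl]

lemma hasDerivAt_slice {h : V3 → ℝ} {x : V3} {n : Fin 3} {t : ℝ}
    (hd : DifferentiableAt ℝ h (Function.update x n t)) :
    HasDerivAt (fun s => h (Function.update x n s))
      (fderiv ℝ h (Function.update x n t) ((Pi.single n 1 : V3))) t := by
  have hu : HasDerivAt (fun s : ℝ => Function.update x n s) ((Pi.single n 1 : V3)) t := by
    have : HasDerivAt (fun s : ℝ => x + (s - x n) • (Pi.single n 1 : V3))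
        ((1:ℝ) • (Pi.single n 1 : V3)) t :=
      (((hasDerivAt_id t).sub_const (x n)).smul_const ((Pi.single n 1 : V3))).const_add x
    rw [one_smul] at this
    convert this using 1
    funext s
    exact update_eq_affine x n s
  exact hd.hasFDerivAt.comp_hasDerivAt t hu

lemma contDiff_slice {h : V3 → ℝ} (hh : ContDiff ℝ (⊤ : ℕ∞) h) (x : V3) (n : Fin 3) :
    ContDiff ℝ (⊤ : ℕ∞) (fun s => h (Function.update x n s)) := by
  apply hh.comp
  have haff : (Function.update x n : ℝ → V3)
      = fun s : ℝ => x + (s - x n) • (Pi.single n 1 : V3) := funext (update_eq_affine x n)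
  rw [haff]
  exact contDiff_const.add ((contDiff_id.sub contDiff_const).smul contDiff_const)

lemma hcs_slice {h : V3 → ℝ} (hs : HasCompactSupport h) (x : V3) (n : Fin 3) :
    HasCompactSupport (fun s => h (Function.update x n s)) := by
  apply HasCompactSupport.intro (hs.isCompact.image (continuous_apply n))
  intro s hsn
  by_contra hne
  apply hsn
  refine ⟨Function.update x n s, subset_tsupport h ?_, by simp⟩
  simpa [Function.mem_support] using hne

lemma update_insertNth (n : Fin 3) (a t : ℝ) (y : Fin 2 → ℝ) :
    Function.update ((n.insertNth a y : V3)) n t = (n.insertNth t y : V3) := by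
  funext l
  by_cases hl : l = n
  · subst hl; simp
  · obtain ⟨m, rfl⟩ := Fin.exists_succAbove_eq hl
    rw [Function.update_of_ne hl]
    rw [Fin.insertNth_apply_succAbove, Fin.insertNth_apply_succAbove]

lemma integral_eq_zero_of_slices (n : Fin 3) (F : V3 → ℝ) (hF : Integrable F)
    (h0 : ∀ x : V3, ∫ t : ℝ, F (Function.update x n t) = 0) : ∫ x : V3, F x = 0 := by
  set me := MeasurableEquiv.piFinSuccAbove (fun _ : Fin 3 => ℝ) n with hme
  have hmp : MeasurePreserving me.symm :=
    (volume_preserving_piFinSuccAbove (fun _ : Fin 3 => ℝ) n).symm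
  rw [← hmp.integral_comp me.symm.measurableEmbedding F]
  have hInt : Integrable (fun p : ℝ × (Fin 2 → ℝ) => F (me.symm p)) :=
    (hmp.integrable_comp_emb me.symm.measurableEmbedding).2 hF
  have hvol : (volume : Measure (ℝ × (Fin 2 → ℝ))) = (volume : Measure ℝ).prod volume :=
    MeasureTheory.Measure.volume_eq_prod _ _
  rw [hvol] at hInt ⊢
  rw [MeasureTheory.integral_prod_symm _ hInt]
  have hsymm : ∀ t (y : Fin 2 → ℝ), me.symm (t, y) = (n.insertNth t y : V3) := by
    intro t y; rfl
  have : ∀ y : Fin 2 → ℝ, ∫ t : ℝ, F (me.symm (t, y)) = 0 := by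
    intro y
    have : ∀ t : ℝ, F (me.symm (t, y)) = F (Function.update (n.insertNth 0 y) n t) := by
      intro t; rw [hsymm, update_insertNth]
    simp only [this]
    exact h0 _
  simp only [this, integral_zero]

end helpers

section core
open Function Set

lemma integral_deriv_cs {f : ℝ → ℝ} (hf : ContDiff ℝ (⊤ : ℕ∞) f) (hs : HasCompactSupport f) :
    ∫ t, deriv f t = 0 := by
  obtain ⟨R, hR⟩ := hs.isBounded.subset_ball 0
  have hd0 : (-R - 1 : ℝ) ∉ tsupport f := by
    intro hmem
    have := hR hmem
    simp only [Metric.mem_ball, Real.dist_eq, sub_zero] at this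
    have := abs_lt.1 this
    linarith [this.1]
  have hzero : ∀ t ∉ Set.Ioi (-R - 1 : ℝ), deriv f t = 0 := by
    intro t ht
    simp only [Set.mem_Ioi, not_lt] at ht
    refine deriv_eq_zero_of_not_mem_tsupport fun hmem => ?_
    have := hR hmem
    simp only [Metric.mem_ball, Real.dist_eq, sub_zero] at this
    have := abs_lt.1 this
    linarith [this.1]
  rw [← setIntegral_eq_integral_of_forall_compl_eq_zero hzero, integral_deriv_Ioi hf hs,
    image_eq_zero_of_notMem_tsupport hd0, neg_zero]

-- component of a test field
lemma comp_contDiff {ψ : V3 → V3} (h : ContDiff ℝ (⊤ : ℕ∞) ψ) (k : Fin 3) :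
    ContDiff ℝ (⊤ : ℕ∞) (fun y => ψ y k) := (contDiff_pi.1 h) k

lemma comp_hcs {ψ : V3 → V3} (h : HasCompactSupport ψ) (k : Fin 3) :
    HasCompactSupport (fun y => ψ y k) := by
  apply HasCompactSupport.intro h
  intro y hy
  rw [image_eq_zero_of_notMem_tsupport hy]
  rfl

lemma pder_continuous {ψ : V3 → V3} (h : ContDiff ℝ (⊤ : ℕ∞) ψ) (k n : Fin 3) :
    Continuous (pder k n ψ) := by
  unfold pder
  exact ((comp_contDiff h k).continuous_fderiv (by simp)).clm_apply continuous_const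

lemma pder_zero_off {ψ : V3 → V3} {x : V3} (hx : x ∉ tsupport ψ) (k n : Fin 3) :
    pder k n ψ x = 0 := by
  have hev : (fun y => ψ y k) =ᶠ[𝓝 x] 0 := by
    filter_upwards [isOpen_compl_iff.2 (isClosed_tsupport ψ) |>.mem_nhds hx] with y hy
    rw [image_eq_zero_of_notMem_tsupport hy]; rfl
  unfold pder
  rw [hev.fderiv_eq]
  have : fderiv ℝ (0 : V3 → ℝ) x = 0 := fderiv_const_apply 0
  rw [this]
  rfl

lemma pder_hcs {ψ : V3 → V3} (h : HasCompactSupport ψ) (k n : Fin 3) :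
    HasCompactSupport (pder k n ψ) :=
  HasCompactSupport.intro h fun _ hx => pder_zero_off hx k n

lemma rot3_zero_off {ψ : V3 → V3} {x : V3} (hx : x ∉ tsupport ψ) (m : Fin 3) :
    rot3 ψ x m = 0 := by
  fin_cases m <;>
    simp [rot3, pder_zero_off hx]

end core

section coreid
open Function Set

def wgt (a b c d : ℝ) (i j : Fin 3) (x : V3) : ℝ :=
  (Set.Ioo a b).indicator (fun _ => (1:ℝ)) (x i) * clampf c d (x j)

lemma ind_meas (a b : ℝ) (i : Fin 3) :
    Measurable (fun x : V3 => (Set.Ioo a b).indicator (fun _ => (1:ℝ)) (x i)) :=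
  (measurable_const.indicator measurableSet_Ioo).comp (measurable_pi_apply i)

lemma ind_bound (a b : ℝ) {t : ℝ} : ‖(Set.Ioo a b).indicator (fun _ => (1:ℝ)) t‖ ≤ 1 := by
  by_cases h : t ∈ Set.Ioo a b <;> simp [h]

lemma wgt_meas (a b c d : ℝ) (i j : Fin 3) : Measurable (wgt a b c d i j) :=
  (ind_meas a b i).mul ((continuous_clampf c d).measurable.comp (measurable_pi_apply j))

lemma wgt_bound {c d : ℝ} (hcd : c ≤ d) (a b : ℝ) (i j : Fin 3) (x : V3) :
    ‖wgt a b c d i j x‖ ≤ d - c := by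
  rw [wgt, norm_mul]
  calc ‖(Set.Ioo a b).indicator (fun _ => (1:ℝ)) (x i)‖ * ‖clampf c d (x j)‖
      ≤ 1 * (d - c) := by
        apply mul_le_mul (ind_bound a b) ?_ (norm_nonneg _) zero_le_one
        rw [Real.norm_eq_abs, abs_of_nonneg (clampf_nonneg hcd)]
        exact clampf_le hcd
    _ = d - c := one_mul _

lemma core {Ω : Set V3} {ψ : V3 → V3} (hψ : TestField Ω ψ)
    (i j k : Fin 3) (hij : i ≠ j) (hik : i ≠ k) (hjk : j ≠ k)
    (hform : ∀ x, rot3 ψ x i = pder k j ψ x - pder j k ψ x)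
    {a b c d : ℝ} (hab : a < b) (hcd : c < d) :
    ∫ x in beam Ω i j a b c d, ψ x k
      = - ∫ x in Ω, wgt a b c d i j x * rot3 ψ x i := by
  obtain ⟨hsm, hcs, hsupp⟩ := hψ
  set ψk : V3 → ℝ := fun y => ψ y k with hψk
  have hψk_cd : ContDiff ℝ (⊤ : ℕ∞) ψk := comp_contDiff hsm k
  have hψk_cs : HasCompactSupport ψk := comp_hcs hcs k
  set ψj : V3 → ℝ := fun y => ψ y j with hψj
  have hψj_cd : ContDiff ℝ (⊤ : ℕ∞) ψj := comp_contDiff hsm j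
  have hψj_cs : HasCompactSupport ψj := comp_hcs hcs j
  have hIψk : Integrable ψk := hψk_cd.continuous.integrable_of_hasCompactSupport hψk_cs
  have hIkj : Integrable (pder k j ψ) :=
    (pder_continuous hsm k j).integrable_of_hasCompactSupport (pder_hcs hcs k j)
  have hIjk : Integrable (pder j k ψ) :=
    (pder_continuous hsm j k).integrable_of_hasCompactSupport (pder_hcs hcs j k)
  set A : V3 → ℝ := fun x => (Set.Ioo a b).indicator (fun _ => (1:ℝ)) (x i) *
    ((Set.Ioo c d).indicator (fun _ => (1:ℝ)) (x j) * ψk x) with hA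
  set B1 : V3 → ℝ := fun x => wgt a b c d i j x * pder k j ψ x with hB1
  set B2 : V3 → ℝ := fun x => wgt a b c d i j x * pder j k ψ x with hB2
  have hIA : Integrable A := by
    apply Integrable.bdd_mul (Integrable.bdd_mul hIψk
      ((ind_meas c d j).aestronglyMeasurable) (Eventually.of_forall fun x => ind_bound c d))
      ((ind_meas a b i).aestronglyMeasurable) (Eventually.of_forall fun x => ind_bound a b)
  have hIB1 : Integrable B1 := Integrable.bdd_mul hIkj
    (wgt_meas a b c d i j).aestronglyMeasurable (Eventually.of_forall (wgt_bound hcd.le a b i j))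
  have hIB2 : Integrable B2 := Integrable.bdd_mul hIjk
    (wgt_meas a b c d i j).aestronglyMeasurable (Eventually.of_forall (wgt_bound hcd.le a b i j))
  -- Step 1 : ∫ (A + B1) = 0
  have step1 : ∫ x : V3, (A x + B1 x) = 0 := by
    apply integral_eq_zero_of_slices j _ (hIA.add hIB1)
    intro x
    have hslice : ∀ t : ℝ, A (update x j t) + B1 (update x j t)
        = (Set.Ioo a b).indicator (fun _ => (1:ℝ)) (x i) *
          ((Set.Ioo c d).indicator (fun _ => (1:ℝ)) t * (fun s => ψk (update x j s)) t
            + clampf c d t * deriv (fun s => ψk (update x j s)) t) := by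
      intro t
      have hui : update x j t i = x i := update_of_ne hij t x
      have huj : update x j t j = t := update_self j t x
      have hd : deriv (fun s => ψk (update x j s)) t
          = pder k j ψ (update x j t) :=
        (hasDerivAt_slice ((hψk_cd.differentiable (by simp)) (update x j t))).deriv
      simp only [hA, hB1, wgt, hui, huj, hd]
      ring
    have : ∀ t : ℝ, ((Set.Ioo c d).indicator (fun _ => (1:ℝ)) t * (fun s => ψk (update x j s)) t
        + clampf c d t * deriv (fun s => ψk (update x j s)) t)
        = ((Set.Ioo c d).indicator (fun _ => (1:ℝ)) t * ψk (update x j t)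
        + clampf c d t * deriv (fun s => ψk (update x j s)) t) := fun t => rfl
    calc ∫ t : ℝ, (A (update x j t) + B1 (update x j t))
        = ∫ t : ℝ, (Set.Ioo a b).indicator (fun _ => (1:ℝ)) (x i) *
          ((Set.Ioo c d).indicator (fun _ => (1:ℝ)) t * (fun s => ψk (update x j s)) t
            + clampf c d t * deriv (fun s => ψk (update x j s)) t) := by
          congr 1; funext t; exact hslice t
      _ = (Set.Ioo a b).indicator (fun _ => (1:ℝ)) (x i) * ∫ t : ℝ,
          ((Set.Ioo c d).indicator (fun _ => (1:ℝ)) t * (fun s => ψk (update x j s)) t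
            + clampf c d t * deriv (fun s => ψk (update x j s)) t) := integral_const_mul _ _
      _ = 0 := by
          rw [oneD_key (contDiff_slice hψk_cd x j) (hcs_slice hψk_cs x j) hcd, mul_zero]
  -- Step 2 : ∫ B2 = 0
  have step2 : ∫ x : V3, B2 x = 0 := by
    apply integral_eq_zero_of_slices k _ hIB2
    intro x
    have hslice : ∀ t : ℝ, B2 (update x k t)
        = wgt a b c d i j x * deriv (fun s => ψj (update x k s)) t := by
      intro t
      have hui : update x k t i = x i := update_of_ne hik t x
      have huj : update x k t j = x j := update_of_ne hjk t x
      have hd : deriv (fun s => ψj (update x k s)) t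
          = pder j k ψ (update x k t) :=
        (hasDerivAt_slice ((hψj_cd.differentiable (by simp)) (update x k t))).deriv
      simp only [hB2, wgt, hui, huj, hd]
    calc ∫ t : ℝ, B2 (update x k t)
        = ∫ t : ℝ, wgt a b c d i j x * deriv (fun s => ψj (update x k s)) t := by
          congr 1; funext t; exact hslice t
      _ = wgt a b c d i j x * ∫ t : ℝ, deriv (fun s => ψj (update x k s)) t :=
          integral_const_mul _ _
      _ = 0 := by
          rw [integral_deriv_cs (contDiff_slice hψj_cd x k) (hcs_slice hψj_cs x k), mul_zero]
  -- Step 3 : combine full-space identities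
  rw [integral_add hIA hIB1] at step1
  have hBrot : ∀ x : V3, wgt a b c d i j x * rot3 ψ x i = B1 x - B2 x := by
    intro x
    rw [hform x, hB1, hB2]
    ring
  have hIrot : Integrable (fun x => wgt a b c d i j x * rot3 ψ x i) := by
    have : (fun x => wgt a b c d i j x * rot3 ψ x i) = fun x => B1 x - B2 x :=
      funext hBrot
    rw [this]
    exact hIB1.sub hIB2
  have hfull : ∫ x : V3, wgt a b c d i j x * rot3 ψ x i = - ∫ x : V3, A x := by
    calc ∫ x : V3, wgt a b c d i j x * rot3 ψ x i
        = ∫ x : V3, (B1 x - B2 x) := by congr 1; funext x; exact hBrot x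
      _ = (∫ x : V3, B1 x) - ∫ x : V3, B2 x := integral_sub hIB1 hIB2
      _ = ∫ x : V3, B1 x := by rw [step2, sub_zero]
      _ = - ∫ x : V3, A x := by linarith
  -- Step 4 : LHS as full-space integral of A
  set S : Set V3 := (fun x : V3 => x i) ⁻¹' (Set.Ioo a b) ∩ (fun x : V3 => x j) ⁻¹' (Set.Ioo c d)
    with hS
  have hSmeas : MeasurableSet S :=
    (measurable_pi_apply i measurableSet_Ioo).inter (measurable_pi_apply j measurableSet_Ioo)
  have hbeamS : beam Ω i j a b c d = Ω ∩ S := by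
    ext x
    simp only [beam, hS, Set.mem_setOf_eq, Set.mem_inter_iff, Set.mem_preimage, Set.mem_Ioo]
  have hLHS : ∫ x in beam Ω i j a b c d, ψ x k = ∫ x : V3, A x := by
    rw [hbeamS]
    have h1 : ∫ x in S, ψk x = ∫ x in Ω ∩ S, ψk x := by
      apply setIntegral_eq_of_subset_of_forall_diff_eq_zero hSmeas Set.inter_subset_right
      intro x hx
      have hxΩ : x ∉ Ω := fun hmem => hx.2 ⟨hmem, hx.1⟩
      have h0 : ψ x = 0 := image_eq_zero_of_notMem_tsupport (fun hm => hxΩ (hsupp hm))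
      show ψ x k = 0
      rw [h0]; rfl
    have h2 : ∫ x in S, ψk x = ∫ x : V3, A x := by
      rw [← integral_indicator hSmeas]
      congr 1
      funext x
      by_cases h1' : a < x i ∧ x i < b <;> by_cases h2' : c < x j ∧ x j < d <;>
        simp [hA, Set.indicator_apply, hS, Set.mem_inter_iff, Set.mem_preimage, Set.mem_Ioo,
          h1', h2']
    rw [← h1, h2]
  -- Step 5 : RHS as full-space integral
  have hRHS : ∫ x in Ω, wgt a b c d i j x * rot3 ψ x i
      = ∫ x : V3, wgt a b c d i j x * rot3 ψ x i := by
    apply setIntegral_eq_integral_of_forall_compl_eq_zero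
    intro x hx
    rw [rot3_zero_off (fun hm => hx (hsupp hm)) i, mul_zero]
  rw [hLHS, hRHS, hfull, neg_neg]

end coreid

section limits

lemma abs_le_half_add_sq {u δ : ℝ} (hδ : 0 < δ) : |u| ≤ δ / 2 + u ^ 2 / (2 * δ) := by
  have h2δ : (0:ℝ) < 2 * δ := by linarith
  have h : |u| * (2 * δ) ≤ δ * δ + u ^ 2 := by nlinarith [sq_nonneg (|u| - δ), sq_abs u]
  have heq : δ / 2 + u ^ 2 / (2 * δ) = (δ * δ + u ^ 2) / (2 * δ) := by
    field_simp
  rw [heq, le_div_iff₀ h2δ]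
  exact h

lemma tendsto_abs_integral_zero {Ω : Set V3} (hvol : volume Ω < ⊤)
    {u : ℕ → V3 → ℝ} (hu : ∀ n, MemLp (u n) 2 (volume.restrict Ω))
    (h2 : Filter.Tendsto (fun n => ∫ x in Ω, (u n x) ^ 2) Filter.atTop (𝓝 0)) :
    Filter.Tendsto (fun n => ∫ x in Ω, |u n x|) Filter.atTop (𝓝 0) := by
  haveI : IsFiniteMeasure (volume.restrict Ω) :=
    ⟨by rwa [Measure.restrict_apply_univ]⟩
  have hsq : ∀ n, Integrable (fun x => (u n x) ^ 2) (volume.restrict Ω) :=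
    fun n => (hu n).integrable_sq
  have hnonneg : ∀ n, 0 ≤ ∫ x in Ω, |u n x| :=
    fun n => integral_nonneg fun x => abs_nonneg _
  rw [Metric.tendsto_atTop]
  intro ε hε
  set V : ℝ := (volume.restrict Ω Set.univ).toReal with hV
  have hV0 : 0 ≤ V := ENNReal.toReal_nonneg
  set δ : ℝ := ε / (V + 1) with hδdef
  have hδ : 0 < δ := div_pos hε (by linarith)
  obtain ⟨N, hN⟩ := (Metric.tendsto_atTop.1 h2) (ε * δ / 2) (by positivity)
  refine ⟨N, fun n hn => ?_⟩
  have hbound : ∫ x in Ω, |u n x| ≤ δ / 2 * V + (∫ x in Ω, (u n x) ^ 2) / (2 * δ) := by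
    have hle : ∫ x in Ω, |u n x| ≤ ∫ x in Ω, (δ / 2 + (u n x) ^ 2 / (2 * δ)) := by
      apply integral_mono_of_nonneg (Filter.Eventually.of_forall fun x => abs_nonneg _)
        ((integrable_const _).add ((hsq n).div_const _))
        (Filter.Eventually.of_forall fun x => abs_le_half_add_sq hδ)
    rw [integral_add (integrable_const _) ((hsq n).div_const _), integral_const,
      integral_div] at hle
    calc ∫ x in Ω, |u n x| ≤ (volume.restrict Ω Set.univ).toReal • (δ / 2)
          + (∫ x in Ω, (u n x) ^ 2) / (2 * δ) := hle
      _ = δ / 2 * V + (∫ x in Ω, (u n x) ^ 2) / (2 * δ) := by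
          rw [smul_eq_mul]; ring
  have hsqsmall : ∫ x in Ω, (u n x) ^ 2 < ε * δ / 2 := by
    have := hN n hn
    rw [Real.dist_eq, sub_zero] at this
    exact lt_of_abs_lt this
  have hδV : δ * V < ε := by
    rw [hδdef, div_mul_eq_mul_div, div_lt_iff₀ (by linarith : (0:ℝ) < V + 1)]
    nlinarith
  have h1 : δ / 2 * V < ε / 2 := by linarith
  have h2' : (∫ x in Ω, (u n x) ^ 2) / (2 * δ) < ε / 4 := by
    have h2δ : (0:ℝ) < 2 * δ := by linarith
    rw [div_lt_iff₀ h2δ]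
    have heq : ε / 4 * (2 * δ) = ε * δ / 2 := by ring
    rw [heq]
    exact hsqsmall
  rw [Real.dist_eq, sub_zero, abs_of_nonneg (hnonneg n)]
  calc ∫ x in Ω, |u n x| ≤ δ / 2 * V + (∫ x in Ω, (u n x) ^ 2) / (2 * δ) := hbound
    _ < ε / 2 + ε / 4 := by exact add_lt_add h1 h2'
    _ < ε := by linarith

end limits

section pairing
open Filter

lemma pairing {Ω : Set V3} (hvol : volume Ω < ⊤)
    {w : V3 → ℝ} (hwm : Measurable w) {M : ℝ} (hM : ∀ x, ‖w x‖ ≤ M)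
    {f : ℕ → V3 → ℝ} {g : V3 → ℝ}
    (hf : ∀ n, MemLp (f n) 2 (volume.restrict Ω)) (hg : MemLp g 2 (volume.restrict Ω))
    (h2 : Tendsto (fun n => ∫ x in Ω, (f n x - g x) ^ 2) atTop (𝓝 0)) :
    Tendsto (fun n => ∫ x in Ω, w x * f n x) atTop (𝓝 (∫ x in Ω, w x * g x)) := by
  haveI : IsFiniteMeasure (volume.restrict Ω) := ⟨by rwa [Measure.restrict_apply_univ]⟩
  have hIf : ∀ n, Integrable (f n) (volume.restrict Ω) := fun n => (hf n).integrable one_le_two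
  have hIg : Integrable g (volume.restrict Ω) := hg.integrable one_le_two
  have hIwf : ∀ n, Integrable (fun x => w x * f n x) (volume.restrict Ω) :=
    fun n => (hIf n).bdd_mul hwm.aestronglyMeasurable (Eventually.of_forall hM)
  have hIwg : Integrable (fun x => w x * g x) (volume.restrict Ω) :=
    hIg.bdd_mul hwm.aestronglyMeasurable (Eventually.of_forall hM)
  have hu : ∀ n, MemLp (fun x => f n x - g x) 2 (volume.restrict Ω) :=
    fun n => (hf n).sub hg
  have habs : Tendsto (fun n => ∫ x in Ω, |f n x - g x|) atTop (𝓝 0) :=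
    tendsto_abs_integral_zero hvol hu h2
  rw [← tendsto_sub_nhds_zero_iff]
  have heq : ∀ n, (∫ x in Ω, w x * f n x) - ∫ x in Ω, w x * g x
      = ∫ x in Ω, w x * (f n x - g x) := by
    intro n
    rw [← integral_sub (hIwf n) hIwg]
    congr 1; funext x; ring
  simp only [heq]
  have hM' : 0 ≤ M := le_trans (norm_nonneg _) (hM (fun _ => 0))
  apply squeeze_zero_norm (a := fun n => M * ∫ x in Ω, |f n x - g x|) ?_ ?_
  · intro n
    calc ‖∫ x in Ω, w x * (f n x - g x)‖
        ≤ ∫ x in Ω, ‖w x * (f n x - g x)‖ := norm_integral_le_integral_norm _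
      _ ≤ ∫ x in Ω, M * |f n x - g x| := by
          apply integral_mono_of_nonneg (Eventually.of_forall fun x => norm_nonneg _)
            (((hIf n).sub hIg).abs.const_mul M)
            (Eventually.of_forall fun x => ?_)
          show ‖w x * (f n x - g x)‖ ≤ M * |f n x - g x|
          rw [norm_mul, Real.norm_eq_abs]
          exact mul_le_mul_of_nonneg_right (hM x) (abs_nonneg _)
      _ = M * ∫ x in Ω, |f n x - g x| := integral_const_mul M _
  · simpa using habs.const_mul M

end pairing

section assembly
open Filter

lemma vol_lt_top {Ω : Set V3} (hb : Bornology.IsBounded Ω) : volume Ω < ⊤ :=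
  hb.measure_lt_top

lemma cont_cs_memL2 {Ω : Set V3} (hvol : volume Ω < ⊤) {h : V3 → ℝ}
    (hc : Continuous h) (hcs : HasCompactSupport h) :
    MemLp h 2 (volume.restrict Ω) := by
  haveI : IsFiniteMeasure (volume.restrict Ω) := ⟨by rwa [Measure.restrict_apply_univ]⟩
  obtain ⟨C, hC⟩ := hcs.exists_bound_of_continuous hc
  exact MemLp.of_bound hc.aestronglyMeasurable C (Filter.Eventually.of_forall hC)

lemma memL2_comp {Ω : Set V3} {φ : V3 → V3} (h : MemLp φ 2 (volume.restrict Ω)) (k : Fin 3) :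
    MemLp (fun x => φ x k) 2 (volume.restrict Ω) :=
  (ContinuousLinearMap.proj (R := ℝ) (φ := fun _ : Fin 3 => ℝ) k).comp_memLp' h

lemma comp_sq_tendsto {Ω : Set V3} {f : ℕ → V3 → V3} {g : V3 → V3}
    (hfL2 : ∀ n m, MemLp (fun x => f n x m) 2 (volume.restrict Ω))
    (hgL2 : ∀ m, MemLp (fun x => g x m) 2 (volume.restrict Ω))
    (h : L2TendstoV Ω f g) (k : Fin 3) :
    Tendsto (fun n => ∫ x in Ω, (f n x k - g x k) ^ 2) atTop (𝓝 0) := by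
  apply squeeze_zero (fun n => integral_nonneg fun x => sq_nonneg _) (fun n => ?_) h
  apply integral_mono_of_nonneg (Eventually.of_forall fun x => sq_nonneg _) ?_
    (Eventually.of_forall fun x => ?_)
  · apply integrable_finset_sum
    intro m _
    exact ((hfL2 n m).sub (hgL2 m)).integrable_sq
  · exact Finset.single_le_sum (f := fun m => (f n x m - g x m) ^ 2)
      (fun m _ => sq_nonneg _) (Finset.mem_univ k)

lemma setInt_ind_mul {Ω B : Set V3} (hBm : MeasurableSet B) (hBsub : B ⊆ Ω) (h : V3 → ℝ) :
    ∫ x in Ω, B.indicator (fun _ => (1:ℝ)) x * h x = ∫ x in B, h x := by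
  have heq : (fun x => B.indicator (fun _ => (1:ℝ)) x * h x) = B.indicator h := by
    funext x; by_cases hx : x ∈ B <;> simp [hx]
  rw [heq, setIntegral_indicator hBm, Set.inter_eq_self_of_subset_right hBsub]

lemma main_cyclic {Ω : Set V3} (hΩo : IsOpen Ω) (hΩb : Bornology.IsBounded Ω)
    {φ rφ : V3 → V3} (hφ : MemRc Ω φ rφ) (hφ2 : L2 Ω φ) (hrφ2 : L2 Ω rφ)
    (i j k : Fin 3) (hij : i ≠ j) (hik : i ≠ k) (hjk : j ≠ k)
    (hform : ∀ (ψ : V3 → V3) (x : V3), rot3 ψ x i = pder k j ψ x - pder j k ψ x)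
    (hrot : ∀ x ∈ Ω, rφ x i = 0)
    {a b c d : ℝ} (hab : a < b) (hcd : c < d) :
    ∫ x in beam Ω i j a b c d, φ x k = 0 := by
  obtain ⟨φs, hts, hconv, hrconv⟩ := hφ
  have hvol : volume Ω < ⊤ := vol_lt_top hΩb
  have hΩm : MeasurableSet Ω := hΩo.measurableSet
  haveI : IsFiniteMeasure (volume.restrict Ω) := ⟨by rwa [Measure.restrict_apply_univ]⟩
  set B := beam Ω i j a b c d with hB
  have hBsub : B ⊆ Ω := fun x hx => hx.1
  have hBm : MeasurableSet B := by
    have hBeq : B = Ω ∩ ((fun x : V3 => x i) ⁻¹' (Set.Ioo a b)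
        ∩ (fun x : V3 => x j) ⁻¹' (Set.Ioo c d)) := by
      ext x
      simp only [hB, beam, Set.mem_setOf_eq, Set.mem_inter_iff, Set.mem_preimage, Set.mem_Ioo]
    rw [hBeq]
    exact hΩm.inter ((measurable_pi_apply i measurableSet_Ioo).inter
      (measurable_pi_apply j measurableSet_Ioo))
  -- MemLp facts for components
  have hφsL2 : ∀ n m, MemLp (fun x => φs n x m) 2 (volume.restrict Ω) := fun n m =>
    cont_cs_memL2 hvol (comp_contDiff (hts n).1 m).continuous (comp_hcs (hts n).2.1 m)
  have hφL2 : ∀ m, MemLp (fun x => φ x m) 2 (volume.restrict Ω) := memL2_comp hφ2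
  have hrotcomp : ∀ n m, (fun x => rot3 (φs n) x m) =
      fun x => ![pder 2 1 (φs n) x - pder 1 2 (φs n) x,
        pder 0 2 (φs n) x - pder 2 0 (φs n) x,
        pder 1 0 (φs n) x - pder 0 1 (φs n) x] m := fun n m => rfl
  have hrotL2 : ∀ n m, MemLp (fun x => rot3 (φs n) x m) 2 (volume.restrict Ω) := by
    intro n m
    have hc : Continuous (fun x => rot3 (φs n) x m) := by
      fin_cases m <;>
        simp only [rot3, Matrix.cons_val_zero, Matrix.cons_val_one, Matrix.head_cons,
          Matrix.cons_val_two, Matrix.tail_cons] <;>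
        exact (pder_continuous (hts n).1 _ _).sub (pder_continuous (hts n).1 _ _)
    have hcs : HasCompactSupport (fun x => rot3 (φs n) x m) :=
      HasCompactSupport.intro (hts n).2.1 fun x hx => rot3_zero_off hx m
    exact cont_cs_memL2 hvol hc hcs
  have hrφL2 : ∀ m, MemLp (fun x => rφ x m) 2 (volume.restrict Ω) := memL2_comp hrφ2
  -- pairing 1 : indicator of B
  have TA : Tendsto (fun n => ∫ x in Ω, B.indicator (fun _ => (1:ℝ)) x * φs n x k) atTop
      (𝓝 (∫ x in Ω, B.indicator (fun _ => (1:ℝ)) x * φ x k)) := by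
    apply pairing hvol (measurable_const.indicator hBm) (M := 1)
      (fun x => by by_cases hx : x ∈ B <;> simp [hx])
      (fun n => hφsL2 n k) (hφL2 k)
      (comp_sq_tendsto hφsL2 hφL2 hconv k)
  have TA' : Tendsto (fun n => ∫ x in B, φs n x k) atTop (𝓝 (∫ x in B, φ x k)) := by
    rw [← setInt_ind_mul hBm hBsub]
    have : ∀ n, ∫ x in B, φs n x k = ∫ x in Ω, B.indicator (fun _ => (1:ℝ)) x * φs n x k :=
      fun n => (setInt_ind_mul hBm hBsub _).symm
    simp only [this]
    exact TA
  -- pairing 2 : weight wgt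
  have TB : Tendsto (fun n => ∫ x in Ω, wgt a b c d i j x * rot3 (φs n) x i) atTop
      (𝓝 (∫ x in Ω, wgt a b c d i j x * rφ x i)) := by
    apply pairing hvol (wgt_meas a b c d i j) (M := d - c) (wgt_bound hcd.le a b i j)
      (fun n => hrotL2 n i) (hrφL2 i)
      (comp_sq_tendsto hrotL2 hrφL2 hrconv i)
  have hzero : ∫ x in Ω, wgt a b c d i j x * rφ x i = 0 := by
    rw [setIntegral_congr_fun hΩm (g := fun _ => (0:ℝ)) (fun x hx => by rw [hrot x hx, mul_zero])]
    exact integral_zero _ _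
  have hcore : ∀ n, ∫ x in B, φs n x k
      = - ∫ x in Ω, wgt a b c d i j x * rot3 (φs n) x i := fun n =>
    core (hts n) i j k hij hik hjk (hform (φs n)) hab hcd
  have TB' : Tendsto (fun n => ∫ x in B, φs n x k) atTop (𝓝 0) := by
    simp only [hcore]
    have := TB.neg
    rw [hzero, neg_zero] at this
    exact this
  exact tendsto_nhds_unique TA' TB'

end assembly

lemma hformgen : ∀ (i' j' k' : Fin 3), j' = i' + 1 → k' = j' + 1 →
    ∀ (ψ : V3 → V3) (x : V3), rot3 ψ x i' = pder k' j' ψ x - pder j' k' ψ x := by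
  intro i' j' k' h1 h2 ψ x
  subst h1; subst h2
  fin_cases i' <;> rfl

lemma beam_comm (Ω : Set V3) (i j : Fin 3) (a b c d : ℝ) :
    beam Ω i j a b c d = beam Ω j i c d a b := by
  ext x; simp only [beam, Set.mem_setOf_eq]; tauto

/-- If `φ ∈ R̊(Ω)` and the `i`-th and `j`-th components of its weak
curl vanish on `Ω`, then the remaining component `φ_k` has zero mean on every beam
`Ω_{ij}`. -/
theorem stmt9 (Ω : Set V3) (hΩo : IsOpen Ω) (hΩc : IsConnected Ω)
    (hΩb : Bornology.IsBounded Ω)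
    (l : Fin 3 → ℝ) (hl : ∀ m, 0 < l m) (hΩl : Ω ⊆ cuboid l)
    (φ rφ : V3 → V3) (hφ : MemRc Ω φ rφ) (hφ2 : L2 Ω φ) (hrφ2 : L2 Ω rφ)
    (i j k : Fin 3) (hij : i ≠ j) (hki : k ≠ i) (hkj : k ≠ j)
    (hrot : ∀ x ∈ Ω, rφ x i = 0 ∧ rφ x j = 0)
    (αi βi αj βj : ℝ) (hαi : 0 ≤ αi) (hi : αi < βi) (hβi : βi ≤ l i)
    (hαj : 0 ≤ αj) (hj : αj < βj) (hβj : βj ≤ l j) :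
    ∫ x in beam Ω i j αi βi αj βj, φ x k = 0 := by
  have horient : (j = i + 1 ∧ k = j + 1) ∨ (i = j + 1 ∧ k = i + 1) := by
    fin_cases i <;> fin_cases j <;> fin_cases k <;> revert hij hki hkj <;> decide
  rcases horient with ⟨h1, h2⟩ | ⟨h1, h2⟩
  · exact main_cyclic hΩo hΩb hφ hφ2 hrφ2 i j k hij (Ne.symm hki) (Ne.symm hkj)
      (hformgen i j k h1 h2) (fun x hx => (hrot x hx).1) hi hj
  · rw [beam_comm]
    exact main_cyclic hΩo hΩb hφ hφ2 hrφ2 j i k (Ne.symm hij) (Ne.symm hkj) (Ne.symm hki)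
      (hformgen j i k h1 h2) (fun x hx => (hrot x hx).2) hj hi
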